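/- The vector fields X = ∂_y and Y(f) = 4f ∂_u − (4vf' + 8x²f'')∂_v + (xf''' − 8hf')∂_h on ℝ⁵ with coordinates (x,y,u,v,h), for smooth f = f(u), satisfy the commutation relations [X, Y(f)] = 0 and [Y(f), Y(g)] = Y(4(fg' − f'g)); in particular they span a Lie algebra of vector fields. -/

import Mathlib

open scoped ContDiff

noncomputable section

/-- Lie bracket of vector fields on `ℝ⁵` (written in components):
`[V,W]^i = V^j ∂_j W^i − W^j ∂_j V^i`. -/
def lieB (V W : (Fin 5 → ℝ) → (Fin 5 → ℝ)) : (Fin 5 → ℝ) → (Fin 5 → ℝ) :=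
  fun p i => fderiv ℝ (fun q => W q i) p (V p) - fderiv ℝ (fun q => V q i) p (W p)

/-- The vector field `X = ∂_y` on `ℝ⁵` with coordinates `(x,y,u,v,h)`. -/
def Xf : (Fin 5 → ℝ) → (Fin 5 → ℝ) := fun _ => Pi.single 1 1

/-- The vector field `Y(f) = 4f ∂_u − (4vf' + 8x²f'') ∂_v + (xf''' − 8hf') ∂_h`. -/
def Yf (f : ℝ → ℝ) : (Fin 5 → ℝ) → (Fin 5 → ℝ) := fun p =>
  ![0, 0, 4 * f (p 2),
    -(4 * p 3 * deriv f (p 2) + 8 * (p 0) ^ 2 * deriv (deriv f) (p 2)),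
    p 0 * deriv (deriv (deriv f)) (p 2) - 8 * p 4 * deriv f (p 2)]

open ContinuousLinearMap in
lemma fdphi (φ : ℝ → ℝ) (hφ : Differentiable ℝ φ) (p : Fin 5 → ℝ) :
    HasFDerivAt (fun q : Fin 5 → ℝ => φ (q 2))
      (deriv φ (p 2) • (proj 2 : (Fin 5 → ℝ) →L[ℝ] ℝ)) p :=
  (hφ (p 2)).hasDerivAt.comp_hasFDerivAt p (hasFDerivAt_apply 2 p)

lemma fd2 (φ : ℝ → ℝ) (hφ : Differentiable ℝ φ) (p v : Fin 5 → ℝ) :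
    fderiv ℝ (fun q : Fin 5 → ℝ => 4 * φ (q 2)) p v = 4 * deriv φ (p 2) * v 2 := by
  have h := ((fdphi φ hφ p).const_mul 4)
  rw [h.fderiv]; simp; ring

open ContinuousLinearMap in
lemma fd3 (a b : ℝ → ℝ) (ha : Differentiable ℝ a) (hb : Differentiable ℝ b) (p v : Fin 5 → ℝ) :
    fderiv ℝ (fun q : Fin 5 → ℝ => -(4 * q 3 * a (q 2) + 8 * q 0 ^ 2 * b (q 2))) p v
    = -(4 * v 3 * a (p 2) + 4 * p 3 * deriv a (p 2) * v 2
        + 16 * p 0 * v 0 * b (p 2) + 8 * p 0 ^ 2 * deriv b (p 2) * v 2) := by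
  have h1 : HasFDerivAt (fun q : Fin 5 → ℝ => 4 * q 3)
      ((4 : ℝ) • (proj 3 : (Fin 5 → ℝ) →L[ℝ] ℝ)) p := (hasFDerivAt_apply 3 p).const_mul 4
  have h2 : HasFDerivAt (fun q : Fin 5 → ℝ => 8 * (q 0 * q 0))
      ((8 : ℝ) • (p 0 • (proj 0 : (Fin 5 → ℝ) →L[ℝ] ℝ) + p 0 • (proj 0 : (Fin 5 → ℝ) →L[ℝ] ℝ))) p :=
    ((hasFDerivAt_apply 0 p).mul (hasFDerivAt_apply 0 p)).const_mul 8
  have h : HasFDerivAt (fun q : Fin 5 → ℝ => -(4 * q 3 * a (q 2) + 8 * (q 0 * q 0) * b (q 2))) _ p :=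
    (((h1.mul (fdphi a ha p)).add (h2.mul (fdphi b hb p))).neg)
  have heq : (fun q : Fin 5 → ℝ => -(4 * q 3 * a (q 2) + 8 * q 0 ^ 2 * b (q 2)))
      = (fun q : Fin 5 → ℝ => -(4 * q 3 * a (q 2) + 8 * (q 0 * q 0) * b (q 2))) := by
    funext q; ring_nf
  rw [heq, h.fderiv]; simp; ring

open ContinuousLinearMap in
lemma fd4 (a c : ℝ → ℝ) (ha : Differentiable ℝ a) (hc : Differentiable ℝ c) (p v : Fin 5 → ℝ) :
    fderiv ℝ (fun q : Fin 5 → ℝ => q 0 * c (q 2) - 8 * q 4 * a (q 2)) p v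
    = v 0 * c (p 2) + p 0 * deriv c (p 2) * v 2
      - (8 * v 4 * a (p 2) + 8 * p 4 * deriv a (p 2) * v 2) := by
  have h1 : HasFDerivAt (fun q : Fin 5 → ℝ => 8 * q 4)
      ((8 : ℝ) • (proj 4 : (Fin 5 → ℝ) →L[ℝ] ℝ)) p := (hasFDerivAt_apply 4 p).const_mul 8
  have h : HasFDerivAt (fun q : Fin 5 → ℝ => q 0 * c (q 2) - 8 * q 4 * a (q 2)) _ p :=
    ((hasFDerivAt_apply 0 p).mul (fdphi c hc p)).sub (h1.mul (fdphi a ha p))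
  rw [h.fderiv]; simp; ring

lemma hasDeriv4 (a b c d : ℝ → ℝ) (ha : Differentiable ℝ a) (hb : Differentiable ℝ b)
    (hc : Differentiable ℝ c) (hd : Differentiable ℝ d) (u : ℝ) :
    HasDerivAt (fun u => 4 * (a u * b u - c u * d u))
      (4 * ((deriv a u * b u + a u * deriv b u) - (deriv c u * d u + c u * deriv d u))) u :=
  (((ha u).hasDerivAt.mul (hb u).hasDerivAt).sub
    ((hc u).hasDerivAt.mul (hd u).hasDerivAt)).const_mul 4

/-- fderiv of the components of `Yf f` in direction `v`. -/
lemma fdYf (f : ℝ → ℝ) (hf : ContDiff ℝ (⊤ : ℕ∞) f) (p v : Fin 5 → ℝ) (i : Fin 5) :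
    fderiv ℝ (fun q => Yf f q i) p v =
    ![0, 0, 4 * deriv f (p 2) * v 2,
      -(4 * v 3 * deriv f (p 2) + 4 * p 3 * deriv (deriv f) (p 2) * v 2
        + 16 * p 0 * v 0 * deriv (deriv f) (p 2)
        + 8 * p 0 ^ 2 * deriv (deriv (deriv f)) (p 2) * v 2),
      v 0 * deriv (deriv (deriv f)) (p 2) + p 0 * deriv (deriv (deriv (deriv f))) (p 2) * v 2
        - (8 * v 4 * deriv f (p 2) + 8 * p 4 * deriv (deriv f) (p 2) * v 2)] i := by
  have h0 : ContDiff ℝ ∞ f := hf.of_le (by simp)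
  have h1 : ContDiff ℝ ∞ (deriv f) := (contDiff_infty_iff_deriv.mp h0).2
  have h2 : ContDiff ℝ ∞ (deriv (deriv f)) := (contDiff_infty_iff_deriv.mp h1).2
  have h3 : ContDiff ℝ ∞ (deriv (deriv (deriv f))) := (contDiff_infty_iff_deriv.mp h2).2
  have d0 : Differentiable ℝ f := h0.differentiable (by simp)
  have d1 : Differentiable ℝ (deriv f) := h1.differentiable (by simp)
  have d2 : Differentiable ℝ (deriv (deriv f)) := h2.differentiable (by simp)
  have d3 : Differentiable ℝ (deriv (deriv (deriv f))) := h3.differentiable (by simp)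
  fin_cases i <;> simp only [Yf, Matrix.cons_val_zero, Matrix.cons_val_one, Matrix.head_cons,
    Matrix.cons_val_two, Matrix.tail_cons, Matrix.cons_val_three, Matrix.cons_val_four,
    Matrix.head_fin_const, Fin.isValue]
  · simp
  · simp
  · exact fd2 f d0 p v
  · exact fd3 (deriv f) (deriv (deriv f)) d1 d2 p v
  · exact fd4 (deriv f) (deriv (deriv (deriv f))) d1 d3 p v

/-- `[X, Y(f)] = 0` and `[Y(f), Y(g)] = Y(4(fg' − f'g))`; in particular the fields
`X, Y(f)` span a Lie algebra of vector fields. -/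
theorem kundt_symmetry_algebra (f g : ℝ → ℝ)
    (hf : ContDiff ℝ (⊤ : ℕ∞) f) (hg : ContDiff ℝ (⊤ : ℕ∞) g) :
    (lieB Xf (Yf f) = fun _ => 0) ∧
      lieB (Yf f) (Yf g) = Yf (fun u => 4 * (f u * deriv g u - deriv f u * g u)) := by
  -- differentiability of the iterated derivatives
  have hf0 : ContDiff ℝ ∞ f := hf.of_le (by simp)
  have hf1 : ContDiff ℝ ∞ (deriv f) := (contDiff_infty_iff_deriv.mp hf0).2
  have hf2 : ContDiff ℝ ∞ (deriv (deriv f)) := (contDiff_infty_iff_deriv.mp hf1).2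
  have hf3 : ContDiff ℝ ∞ (deriv (deriv (deriv f))) := (contDiff_infty_iff_deriv.mp hf2).2
  have df0 : Differentiable ℝ f := hf0.differentiable (by simp)
  have df1 : Differentiable ℝ (deriv f) := hf1.differentiable (by simp)
  have df2 : Differentiable ℝ (deriv (deriv f)) := hf2.differentiable (by simp)
  have df3 : Differentiable ℝ (deriv (deriv (deriv f))) := hf3.differentiable (by simp)
  have hg0 : ContDiff ℝ ∞ g := hg.of_le (by simp)
  have hg1 : ContDiff ℝ ∞ (deriv g) := (contDiff_infty_iff_deriv.mp hg0).2
  have hg2 : ContDiff ℝ ∞ (deriv (deriv g)) := (contDiff_infty_iff_deriv.mp hg1).2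
  have hg3 : ContDiff ℝ ∞ (deriv (deriv (deriv g))) := (contDiff_infty_iff_deriv.mp hg2).2
  have dg0 : Differentiable ℝ g := hg0.differentiable (by simp)
  have dg1 : Differentiable ℝ (deriv g) := hg1.differentiable (by simp)
  have dg2 : Differentiable ℝ (deriv (deriv g)) := hg2.differentiable (by simp)
  have dg3 : Differentiable ℝ (deriv (deriv (deriv g))) := hg3.differentiable (by simp)
  -- derivatives of F = 4 (f g' - f' g)
  have e1 : deriv (fun u => 4 * (f u * deriv g u - deriv f u * g u))
      = fun u => 4 * (f u * deriv (deriv g) u - deriv (deriv f) u * g u) := by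
    funext u
    rw [(hasDeriv4 f (deriv g) (deriv f) g df0 dg1 df1 dg0 u).deriv]; ring
  have e2 : deriv (deriv (fun u => 4 * (f u * deriv g u - deriv f u * g u)))
      = fun u => 4 * ((f u * deriv (deriv (deriv g)) u + deriv f u * deriv (deriv g) u)
          - (deriv (deriv f) u * deriv g u + deriv (deriv (deriv f)) u * g u)) := by
    rw [e1]; funext u
    rw [(hasDeriv4 f (deriv (deriv g)) (deriv (deriv f)) g df0 dg2 df2 dg0 u).deriv]; ring
  have e3 : deriv (deriv (deriv (fun u => 4 * (f u * deriv g u - deriv f u * g u))))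
      = fun u => 4 * ((f u * deriv (deriv (deriv (deriv g))) u
            + 2 * deriv f u * deriv (deriv (deriv g)) u)
          - (2 * deriv (deriv (deriv f)) u * deriv g u
            + deriv (deriv (deriv (deriv f))) u * g u)) := by
    rw [e2]; funext u
    have ha := ((df0 u).hasDerivAt.mul (dg3 u).hasDerivAt).add
      ((df1 u).hasDerivAt.mul (dg2 u).hasDerivAt)
    have hb := ((df2 u).hasDerivAt.mul (dg1 u).hasDerivAt).add
      ((df3 u).hasDerivAt.mul (dg0 u).hasDerivAt)
    have h4 : HasDerivAt (fun u => 4 * (f u * deriv (deriv (deriv g)) u + deriv f u * deriv (deriv g) u -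
        (deriv (deriv f) u * deriv g u + deriv (deriv (deriv f)) u * g u))) _ u :=
      (ha.sub hb).const_mul 4
    rw [h4.deriv]; ring
  constructor
  · funext p
    funext i
    show fderiv ℝ (fun q => Yf f q i) p (Xf p)
        - fderiv ℝ (fun q => Xf q i) p (Yf f p) = 0
    have hXc : (fun q : Fin 5 → ℝ => Xf q i) = fun _ : Fin 5 → ℝ => (Pi.single 1 1 : Fin 5 → ℝ) i := rfl
    rw [fdYf f hf p (Xf p) i, hXc, fderiv_const_apply]
    have h1 : Xf p 0 = 0 := rfl
    have h2 : Xf p 2 = 0 := rfl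
    have h3 : Xf p 3 = 0 := rfl
    have h4 : Xf p 4 = 0 := rfl
    fin_cases i <;> simp [h1, h2, h3, h4]
  · funext p
    funext i
    show fderiv ℝ (fun q => Yf g q i) p (Yf f p)
        - fderiv ℝ (fun q => Yf f q i) p (Yf g p)
        = Yf (fun u => 4 * (f u * deriv g u - deriv f u * g u)) p i
    rw [fdYf g hg p (Yf f p) i, fdYf f hf p (Yf g p) i]
    have A0 : Yf f p 0 = 0 := rfl
    have A2 : Yf f p 2 = 4 * f (p 2) := rfl
    have A3 : Yf f p 3 = -(4 * p 3 * deriv f (p 2) + 8 * (p 0) ^ 2 * deriv (deriv f) (p 2)) := rfl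
    have A4 : Yf f p 4 = p 0 * deriv (deriv (deriv f)) (p 2) - 8 * p 4 * deriv f (p 2) := rfl
    have B0 : Yf g p 0 = 0 := rfl
    have B2 : Yf g p 2 = 4 * g (p 2) := rfl
    have B3 : Yf g p 3 = -(4 * p 3 * deriv g (p 2) + 8 * (p 0) ^ 2 * deriv (deriv g) (p 2)) := rfl
    have B4 : Yf g p 4 = p 0 * deriv (deriv (deriv g)) (p 2) - 8 * p 4 * deriv g (p 2) := rfl
    fin_cases i
    · simp [Yf]
    · simp [Yf]
    · simp only [A0, A2, A3, A4, B0, B2, B3, B4]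
      simp only [Yf]
      simp
      ring
    · simp only [A0, A2, A3, A4, B0, B2, B3, B4]
      simp only [Yf]
      rw [e2, e1]
      simp
      ring
    · simp only [A0, A2, A3, A4, B0, B2, B3, B4]
      simp only [Yf]
      rw [e3, e1]
      simp
      ring

end
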